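/- For any extensive form game G and any formula φ ∈ Φ with ⟦φ⟧ ⊊ Ω(G), it holds that ⟦G^{c,s}_i(φ)⟧ = ∅ for every integer i ≥ |Ω(G)| − 1, where |Ω(G)| is the number of outcomes of G. -/

import Mathlib

/-- An extensive form game: a nonempty finite rooted tree. Nodes are represented as
positions, i.e. lists of child indices with the *head* being the most recent step,
so the root is `[]` and the parent of `i :: t` is `t`. Each node carries an agent
label (meaningful on non-leaf nodes) and a set of propositional variables
(meaningful on leaf nodes, the outcomes). -/
structure Game (Agent PropVar : Type) where
  Node : Set (List ℕ)
  root_mem : [] ∈ Node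
  downward : ∀ (i : ℕ) (t : List ℕ), i :: t ∈ Node → t ∈ Node
  finite : Node.Finite
  label : List ℕ → Agent
  leafLabel : List ℕ → Set PropVar

namespace Game

variable {Agent PropVar : Type}

/-- A leaf node (outcome) of the game. -/
def IsOutcome (G : Game Agent PropVar) (w : List ℕ) : Prop :=
  w ∈ G.Node ∧ ∀ i : ℕ, i :: w ∉ G.Node

/-- The set `Ω(G)` of outcomes (leaf nodes) of the game. -/
def outcomes (G : Game Agent PropVar) : Set (List ℕ) := {w | G.IsOutcome w}

/-- `w ⪯ n`: node `n` lies on the simple path (including endpoints) from the root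
to `w`; in the position representation this means `n` is a suffix of `w`. -/
def below (w n : List ℕ) : Prop := n <:+ w

/-- A non-root node `n` is an `X`-achievement point by agent `a` if (1) its parent is
labelled with `a`, (2) some outcome `w ⪯ parent(n)` is not in `X`, and (3) every
outcome `w ⪯ n` is in `X`. -/
def AchievePoint (G : Game Agent PropVar) (X : Set (List ℕ)) (a : Agent) (n : List ℕ) : Prop :=
  ∃ (i : ℕ) (t : List ℕ), n = i :: t ∧ n ∈ G.Node ∧ G.label t = a ∧
    (∃ w ∈ G.outcomes, t <:+ w ∧ w ∉ X) ∧
    (∀ w ∈ G.outcomes, n <:+ w → w ∈ X)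

/-- `win_a(X)`: the minimal set of nodes containing `X`, containing every non-leaf
node labelled `a` with at least one child in the set, and containing every non-leaf
node not labelled `a` all of whose children are in the set. -/
inductive Win (G : Game Agent PropVar) (a : Agent) (X : Set (List ℕ)) : List ℕ → Prop
  | mem (w : List ℕ) (hw : w ∈ X) : Win G a X w
  | own (n : List ℕ) (hn : n ∈ G.Node) (hl : G.label n = a) (i : ℕ)
      (hi : i :: n ∈ G.Node) (h : Win G a X (i :: n)) : Win G a X n
  | other (n : List ℕ) (hn : n ∈ G.Node) (hl : G.label n ≠ a)
      (hne : ∃ i : ℕ, i :: n ∈ G.Node)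
      (h : ∀ i : ℕ, i :: n ∈ G.Node → Win G a X (i :: n)) : Win G a X n

/-- The semantic counterfactual-responsibility operator on sets of outcomes:
`Cset a X` is the set of outcomes `w ∈ X` such that some node `n` with `w ⪯ n`
belongs to `win_a(Ω(G) ∖ X)`. -/
def Cset (G : Game Agent PropVar) (a : Agent) (X : Set (List ℕ)) : Set (List ℕ) :=
  {w | w ∈ X ∧ ∃ n : List ℕ, n <:+ w ∧ G.Win a (G.outcomes \ X) n}

/-- The semantic seeing-to-it-responsibility operator on sets of outcomes:
`Sset a X` is the set of outcomes `w` such that (a) every node `n` with `w ⪯ n`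
belongs to `win_a(X)` and (b) there is an `X`-achievement point `n` by agent `a`
with `w ⪯ n`. -/
def Sset (G : Game Agent PropVar) (a : Agent) (X : Set (List ℕ)) : Set (List ℕ) :=
  {w | w ∈ G.outcomes ∧ (∀ n : List ℕ, n <:+ w → G.Win a X n) ∧
    ∃ n : List ℕ, G.AchievePoint X a n ∧ n <:+ w}

end Game

/-- The language `Φ`: `φ ::= p | ¬φ | φ∧φ | C_a φ | S_a φ`. -/
inductive Formula (Agent PropVar : Type) where
  | var : PropVar → Formula Agent PropVar
  | neg : Formula Agent PropVar → Formula Agent PropVar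
  | and : Formula Agent PropVar → Formula Agent PropVar → Formula Agent PropVar
  | C : Agent → Formula Agent PropVar → Formula Agent PropVar
  | S : Agent → Formula Agent PropVar → Formula Agent PropVar

namespace Game

variable {Agent PropVar : Type}

/-- The truth set `⟦φ⟧ ⊆ Ω(G)` of a formula. -/
def truth (G : Game Agent PropVar) : Formula Agent PropVar → Set (List ℕ)
  | .var p => {w | w ∈ G.outcomes ∧ p ∈ G.leafLabel w}
  | .neg φ => G.outcomes \ G.truth φ
  | .and φ ψ => G.truth φ ∩ G.truth ψ
  | .C a φ => G.Cset a (G.truth φ)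
  | .S a φ => G.Sset a (G.truth φ)

/-- The truth set of the `i`-th order counterfactual gap formula
`G^c_0(φ) := φ`, `G^c_{i+1}(φ) := G^c_i(φ) ∧ ⋀_{a∈𝒜} ¬C_a G^c_i(φ)`. -/
def gapCIter (G : Game Agent PropVar) (φ : Formula Agent PropVar) : ℕ → Set (List ℕ)
  | 0 => G.truth φ
  | i + 1 => G.gapCIter φ i ∩ ⋂ a : Agent, (G.outcomes \ G.Cset a (G.gapCIter φ i))

/-- The truth set of the `i`-th order combined gap formula
`G^{c,s}_0(φ) := φ`,
`G^{c,s}_{i+1}(φ) := G^{c,s}_i(φ) ∧ ⋀_{a∈𝒜} ¬C_a G^{c,s}_i(φ) ∧ ⋀_{a∈𝒜} ¬S_a G^{c,s}_i(φ)`. -/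
def gapCSIter (G : Game Agent PropVar) (φ : Formula Agent PropVar) : ℕ → Set (List ℕ)
  | 0 => G.truth φ
  | i + 1 => G.gapCSIter φ i ∩ (⋂ a : Agent, (G.outcomes \ G.Cset a (G.gapCSIter φ i)))
      ∩ (⋂ a : Agent, (G.outcomes \ G.Sset a (G.gapCSIter φ i)))

end Game

/-- `φ` contains no occurrence of the modality `C`. -/
def Formula.noC {Agent PropVar : Type} : Formula Agent PropVar → Prop
  | .var _ => True
  | .neg φ => φ.noC
  | .and φ ψ => φ.noC ∧ ψ.noC
  | .C _ _ => False
  | .S _ φ => φ.noC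

/-- `φ` contains no occurrence of the modality `S`. -/
def Formula.noS {Agent PropVar : Type} : Formula Agent PropVar → Prop
  | .var _ => True
  | .neg φ => φ.noS
  | .and φ ψ => φ.noS ∧ ψ.noS
  | .C _ φ => φ.noS
  | .S _ _ => False

/-!
If a set `X` of outcomes is nonempty and misses some outcome, take a deepest node `n` lying
above both an outcome in `X` and one outside it. Some child of `n` has only outcomes outside
`X` below it, so the agent moving at `n` can force `Ω ∖ X` from `n`, and every outcome of `X`
below `n` is counterfactually attributable to that agent. Hence each step of the gap iteration
removes an outcome while the set is nonempty, and `⟦φ⟧` has at most `|Ω| - 1` outcomes.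
-/

lemma List.IsSuffix.exists_cons_suffix {α : Type*} {l₁ l₂ : List α} (h : l₁ <:+ l₂)
    (hne : l₁ ≠ l₂) : ∃ a, a :: l₁ <:+ l₂ := by
  obtain ⟨l, rfl⟩ := h
  have hl : l ≠ [] := by rintro rfl; exact hne rfl
  refine ⟨l.getLast hl, l.dropLast, ?_⟩
  rw [← List.singleton_append, ← List.append_assoc, List.dropLast_append_getLast hl]

namespace Game

variable {Agent PropVar : Type} (G : Game Agent PropVar)

lemma mem_node_of_suffix {n w : List ℕ} (hw : w ∈ G.Node) (h : n <:+ w) : n ∈ G.Node := by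
  obtain ⟨l, rfl⟩ := h
  induction l with
  | nil => exact hw
  | cons i l ih => exact ih (G.downward i _ hw)

lemma outcomes_finite : G.outcomes.Finite :=
  G.finite.subset fun _ hw => hw.1

lemma exists_forall_length_le : ∃ N, ∀ m ∈ G.Node, m.length ≤ N := by
  obtain ⟨N, hN⟩ := (G.finite.image List.length).bddAbove
  exact ⟨N, fun m hm => hN ⟨m, hm, rfl⟩⟩

lemma win_of_forall_outcomes_mem_of_length_le {a : Agent} {Y : Set (List ℕ)} (N : ℕ)
    (hN : ∀ m ∈ G.Node, m.length ≤ N) {n : List ℕ} (hn : n ∈ G.Node)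
    (hY : ∀ w ∈ G.outcomes, n <:+ w → w ∈ Y) : G.Win a Y n := by
  by_cases hleaf : ∃ i, i :: n ∈ G.Node
  · have hchild : ∀ i, i :: n ∈ G.Node → G.Win a Y (i :: n) := fun i hi =>
      win_of_forall_outcomes_mem_of_length_le N hN hi
        fun w hw hsuf => hY w hw ((List.suffix_cons i n).trans hsuf)
    by_cases hl : G.label n = a
    · obtain ⟨i, hi⟩ := hleaf
      exact .own n hn hl i hi (hchild i hi)
    · exact .other n hn hl hleaf hchild
  · exact .mem n (hY n ⟨hn, fun i hi => hleaf ⟨i, hi⟩⟩ List.suffix_rfl)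
termination_by N - n.length
decreasing_by have := hN _ hi; simp only [List.length_cons] at this ⊢; omega

lemma win_of_forall_outcomes_mem {a : Agent} {Y : Set (List ℕ)} {n : List ℕ}
    (hn : n ∈ G.Node) (hY : ∀ w ∈ G.outcomes, n <:+ w → w ∈ Y) : G.Win a Y n :=
  have ⟨N, hN⟩ := G.exists_forall_length_le
  G.win_of_forall_outcomes_mem_of_length_le N hN hn hY

lemma exists_child_forall_outcomes_not_mem {X : Set (List ℕ)} (hX : X ⊆ G.outcomes)
    (hne : X.Nonempty) {u : List ℕ} (hu : u ∈ G.outcomes) (huX : u ∉ X) :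
    ∃ w ∈ X, ∃ n j, n <:+ w ∧ j :: n ∈ G.Node ∧ ∀ v ∈ G.outcomes, j :: n <:+ v → v ∉ X := by
  let M : Set (List ℕ) := {n | n ∈ G.Node ∧ (∃ w ∈ X, n <:+ w) ∧ n <:+ u}
  obtain ⟨w₀, hw₀⟩ := hne
  obtain ⟨n, ⟨-, ⟨w, hwX, hnw⟩, hnu⟩, hmax⟩ :=
    Set.Finite.exists_maximalFor List.length M (G.finite.subset fun _ h => h.1)
      ⟨[], G.root_mem, ⟨w₀, hw₀, List.nil_suffix⟩, List.nil_suffix⟩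
  have hnu_ne : n ≠ u := by
    rintro rfl
    obtain ⟨j, hj⟩ := hnw.exists_cons_suffix (by rintro rfl; exact huX hwX)
    exact hu.2 j (G.mem_node_of_suffix (hX hwX).1 hj)
  obtain ⟨j, hj⟩ := hnu.exists_cons_suffix hnu_ne
  have hjNode : j :: n ∈ G.Node := G.mem_node_of_suffix hu.1 hj
  refine ⟨w, hwX, n, j, hnw, hjNode, fun v _ hjv hvX => ?_⟩
  exact Nat.not_succ_le_self n.length (hmax ⟨hjNode, ⟨v, hvX, hjv⟩, hj⟩ (by simp))

lemma exists_Cset_nonempty {X : Set (List ℕ)} (hX : X ⊆ G.outcomes) (hne : X.Nonempty)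
    {u : List ℕ} (hu : u ∈ G.outcomes) (huX : u ∉ X) : ∃ a, (G.Cset a X).Nonempty := by
  obtain ⟨w, hwX, n, j, hnw, hjNode, hpure⟩ :=
    G.exists_child_forall_outcomes_not_mem hX hne hu huX
  have hwin : G.Win (G.label n) (G.outcomes \ X) (j :: n) :=
    G.win_of_forall_outcomes_mem hjNode fun v hv hjv => ⟨hv, hpure v hv hjv⟩
  exact ⟨G.label n, w, hwX, n, hnw, .own n (G.downward j n hjNode) rfl j hjNode hwin⟩

lemma truth_subset_outcomes (φ : Formula Agent PropVar) : G.truth φ ⊆ G.outcomes := by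
  induction φ with
  | var _ | neg _ _ | S _ _ _ => exact fun _ hw => hw.1
  | and _ _ ih _ | C _ _ ih => exact fun _ hw => ih hw.1

lemma gapCSIter_succ_subset (φ : Formula Agent PropVar) (i : ℕ) :
    G.gapCSIter φ (i + 1) ⊆ G.gapCSIter φ i :=
  fun _ hw => hw.1.1

lemma gapCSIter_subset_truth (φ : Formula Agent PropVar) (i : ℕ) :
    G.gapCSIter φ i ⊆ G.truth φ := by
  induction i with
  | zero => exact subset_rfl
  | succ i ih => exact (G.gapCSIter_succ_subset φ i).trans ih

lemma gapCSIter_succ_disjoint_Cset (φ : Formula Agent PropVar) (i : ℕ) (a : Agent) :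
    Disjoint (G.gapCSIter φ (i + 1)) (G.Cset a (G.gapCSIter φ i)) :=
  Set.disjoint_left.2 fun _ hw hC => (Set.mem_iInter.1 hw.1.2 a).2 hC

lemma gapCSIter_succ_ne (φ : Formula Agent PropVar) (hφ : G.truth φ ⊂ G.outcomes) (i : ℕ)
    (hne : (G.gapCSIter φ i).Nonempty) : G.gapCSIter φ (i + 1) ≠ G.gapCSIter φ i := by
  obtain ⟨u, hu, huφ⟩ := Set.exists_of_ssubset hφ
  have hX := (G.gapCSIter_subset_truth φ i).trans (G.truth_subset_outcomes φ)
  obtain ⟨a, w, hwC⟩ :=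
    G.exists_Cset_nonempty hX hne hu fun h => huφ (G.gapCSIter_subset_truth φ i h)
  intro heq
  exact Set.disjoint_left.1 (G.gapCSIter_succ_disjoint_Cset φ i a) (heq ▸ hwC.1) hwC

end Game

lemma Set.eq_empty_of_ncard_le_of_succ_ssubset {α : Type*} {s : ℕ → Set α}
    (hfin : (s 0).Finite) (hsub : ∀ i, s (i + 1) ⊆ s i)
    (hne : ∀ i, (s i).Nonempty → s (i + 1) ≠ s i) {i : ℕ} (hi : (s 0).ncard ≤ i) :
    s i = ∅ := by
  have hanti : Antitone s := antitone_nat_of_succ_le hsub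
  have hfin' (j : ℕ) : (s j).Finite := hfin.subset (hanti (Nat.zero_le j))
  have hcard (j : ℕ) : s j = ∅ ∨ (s j).ncard + j ≤ (s 0).ncard := by
    induction j with
    | zero => exact .inr le_rfl
    | succ j ih =>
      rcases (s j).eq_empty_or_nonempty with hj | hj
      · exact .inl (Set.subset_empty_iff.1 (hj ▸ hsub j))
      · have := Set.ncard_lt_ncard ((hsub j).ssubset_of_ne (hne j hj)) (hfin' j)
        rcases ih with ih | ih
        · exact absurd ih hj.ne_empty
        · exact .inr (by omega)
  rcases hcard i with h | h
  · exact h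
  · exact (Set.ncard_eq_zero (hfin' i)).1 (by omega)

theorem no_higher_order_gapCS_general {Agent PropVar : Type}
    (G : Game Agent PropVar) (φ : Formula Agent PropVar)
    (hφ : G.truth φ ⊂ G.outcomes)
    (i : ℕ) (hi : G.outcomes.ncard - 1 ≤ i) :
    G.gapCSIter φ i = ∅ := by
  have hcard : (G.truth φ).ncard < G.outcomes.ncard := Set.ncard_lt_ncard hφ G.outcomes_finite
  exact Set.eq_empty_of_ncard_le_of_succ_ssubset (G.outcomes_finite.subset hφ.subset)
    (G.gapCSIter_succ_subset φ) (G.gapCSIter_succ_ne φ hφ) (by simp only [Game.gapCSIter]; omega)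

/-- for any extensive form game `G` and formula `φ` with `⟦φ⟧ ⊊ Ω(G)`,
the truth set `⟦G^{c,s}_i(φ)⟧` is empty for every `i ≥ |Ω(G)| − 1`. -/
theorem no_higher_order_gapCS {Agent PropVar : Type} [Fintype Agent]
    (G : Game Agent PropVar) (φ : Formula Agent PropVar)
    (hφ : G.truth φ ⊂ G.outcomes)
    (i : ℕ) (hi : G.outcomes.ncard - 1 ≤ i) :
    G.gapCSIter φ i = ∅ :=
  no_higher_order_gapCS_general G φ hφ i hi
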